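/- arXiv:1012.3238 — 2 statements merged into one kernel-verified Lean document; each statement's English description precedes it below -/
import Mathlib

section
/- Let n ≥ 1, and let (J,K,L) and (J',K',L') be two partitions of [n+2] into three parts with J, K, J', K' all nonempty. Then the cell U_{J'K'L'} is contained in the cell U_{JKL} if and only if J ⊆ J' and K ⊆ K'. Moreover, when J ⊆ J' and K ⊆ K' hold and (J,K,L) ≠ (J',K',L'), one automatically has L' ⊊ L. -/
/-!
A point of `U_{J'K'L'}` with coordinates in `[0, 1]` (we take `0` on `J'`, `1` on `K'` and `1/2`
elsewhere) lies in `U_{JKL}` only with zero shift: the shift `c` equals its coordinate at a point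
of `J`, so `c ≥ 0`, while its coordinate at a point of `K` is `1 + c ≤ 1`. Hence it vanishes on
`J` and equals `1` on `K`, forcing `J ⊆ J'` and `K ⊆ K'`. The converse inclusion of cells is
immediate, and the statement about `L` is bookkeeping with partitions.
-/

open Finset

/-- The saturation (under translations by multiples of the all-ones vector) of
the cell `U_{JKL}` of the boundary of the zonotope `Z_n`, as a subset of
`ℝ^{n+2}`; its image in the quotient `ℝ^{n+2}/ℝ·(1,…,1)` is the cell itself. -/
def cellU (n : ℕ) (J K L : Finset (Fin (n + 2))) : Set (Fin (n + 2) → ℝ) :=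
  {x | ∃ y : Fin (n + 2) → ℝ, ∃ c : ℝ,
      (∀ j ∈ J, y j = 0) ∧ (∀ k ∈ K, y k = 1) ∧
      (∀ l ∈ L, y l ∈ Set.Icc (0 : ℝ) 1) ∧ (∀ i, x i = y i + c)}

namespace Finset

variable {α : Type*} [Fintype α] [DecidableEq α] {A B C A' B' C' : Finset α}

theorem subset_of_union_eq_univ_of_disjoint (hcover : A ∪ B ∪ C = univ)
    (hAC' : Disjoint A' C') (hBC' : Disjoint B' C') (hA : A ⊆ A') (hB : B ⊆ B') : C' ⊆ C := by
  intro x hx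
  have hx_cover : x ∈ A ∪ B ∪ C := hcover ▸ mem_univ x
  rcases mem_union.1 hx_cover with hAB | hC
  · rcases mem_union.1 hAB with hA_x | hB_x
    · exact absurd hx (disjoint_left.1 hAC' (hA hA_x))
    · exact absurd hx (disjoint_left.1 hBC' (hB hB_x))
  · exact hC

theorem ssubset_of_union_eq_univ_of_disjoint (hcover : A ∪ B ∪ C = univ)
    (hAB' : Disjoint A' B') (hAC' : Disjoint A' C') (hBC' : Disjoint B' C')
    (hA : A ⊆ A') (hB : B ⊆ B') (hne : (A, B, C) ≠ (A', B', C')) : C' ⊂ C := by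
  have hC : C' ⊆ C := subset_of_union_eq_univ_of_disjoint hcover hAC' hBC' hA hB
  refine hC.ssubset_of_ne fun hCC => hne ?_
  subst hCC
  have hA' : A' ⊆ A := subset_of_union_eq_univ_of_disjoint (C := A)
    (by rw [← hcover]; ac_rfl) hAB'.symm hAC'.symm hB subset_rfl
  have hB' : B' ⊆ B := subset_of_union_eq_univ_of_disjoint (C := B)
    (by rw [← hcover]; ac_rfl) hAB' hBC'.symm hA subset_rfl
  rw [hA.antisymm hA', hB.antisymm hB']

end Finset

section Cells

variable {n : ℕ} {J K L J' K' L' : Finset (Fin (n + 2))}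

theorem cellU_mono (hJ : J ⊆ J') (hK : K ⊆ K') (hcover' : J' ∪ K' ∪ L' = univ) :
    cellU n J' K' L' ⊆ cellU n J K L := by
  rintro x ⟨y, c, hyJ, hyK, hyL, hxy⟩
  refine ⟨y, c, fun j hj => hyJ j (hJ hj), fun k hk => hyK k (hK hk), fun l _ => ?_, hxy⟩
  have hl : l ∈ J' ∪ K' ∪ L' := hcover' ▸ mem_univ l
  rcases mem_union.1 hl with hJK' | hL'
  · rcases mem_union.1 hJK' with hJ' | hK'
    · simp [hyJ l hJ']
    · simp [hyK l hK']
  · exact hyL l hL'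

theorem eq_zero_and_eq_one_of_mem_cellU {x : Fin (n + 2) → ℝ} (hJ : J.Nonempty)
    (hK : K.Nonempty) (hx01 : ∀ i, x i ∈ Set.Icc (0 : ℝ) 1) (hx : x ∈ cellU n J K L) :
    (∀ j ∈ J, x j = 0) ∧ (∀ k ∈ K, x k = 1) := by
  obtain ⟨y, c, hyJ, hyK, -, hxy⟩ := hx
  obtain ⟨j₀, hj₀⟩ := hJ
  obtain ⟨k₀, hk₀⟩ := hK
  have hc_nonneg : 0 ≤ c := by simpa [hxy j₀, hyJ j₀ hj₀] using (hx01 j₀).1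
  have hc_nonpos : c ≤ 0 := by simpa [hxy k₀, hyK k₀ hk₀] using (hx01 k₀).2
  have hc : c = 0 := le_antisymm hc_nonpos hc_nonneg
  exact ⟨fun j hj => by rw [hxy j, hyJ j hj, hc, add_zero],
    fun k hk => by rw [hxy k, hyK k hk, hc, add_zero]⟩

noncomputable def cellPoint (J K : Finset (Fin (n + 2))) : Fin (n + 2) → ℝ :=
  fun i => if i ∈ J then 0 else if i ∈ K then 1 else 1 / 2

theorem cellPoint_mem_Icc (i : Fin (n + 2)) : cellPoint J K i ∈ Set.Icc (0 : ℝ) 1 := by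
  unfold cellPoint
  split_ifs <;> norm_num

theorem cellPoint_mem_cellU (hJK : Disjoint J K) : cellPoint J K ∈ cellU n J K L := by
  refine ⟨cellPoint J K, 0, fun j hj => if_pos hj, fun k hk => ?_,
    fun l _ => cellPoint_mem_Icc l, fun i => (add_zero _).symm⟩
  simp [cellPoint, disjoint_right.1 hJK hk, hk]

theorem subset_and_subset_of_cellU_subset (hJK' : Disjoint J' K') (hJ : J.Nonempty)
    (hK : K.Nonempty) (hsub : cellU n J' K' L' ⊆ cellU n J K L) : J ⊆ J' ∧ K ⊆ K' := by
  obtain ⟨hzero, hone⟩ := eq_zero_and_eq_one_of_mem_cellU hJ hK cellPoint_mem_Icc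
    (hsub (cellPoint_mem_cellU (L := L') hJK'))
  refine ⟨fun j hj => ?_, fun k hk => ?_⟩
  · by_contra hjJ'
    have := hzero j hj
    unfold cellPoint at this
    split_ifs at this <;> norm_num at this
  · by_contra hkK'
    have := hone k hk
    unfold cellPoint at this
    split_ifs at this <;> norm_num at this

theorem cellU_subset_cellU_iff (hJK' : Disjoint J' K') (hcover' : J' ∪ K' ∪ L' = univ)
    (hJ : J.Nonempty) (hK : K.Nonempty) :
    cellU n J' K' L' ⊆ cellU n J K L ↔ J ⊆ J' ∧ K ⊆ K' :=
  ⟨subset_and_subset_of_cellU_subset hJK' hJ hK, fun h => cellU_mono h.1 h.2 hcover'⟩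

end Cells

theorem stmt_2_general (n : ℕ)
    (J K L J' K' L' : Finset (Fin (n + 2)))
    (hcover : J ∪ K ∪ L = Finset.univ)
    (hJK' : Disjoint J' K') (hJL' : Disjoint J' L') (hKL' : Disjoint K' L')
    (hcover' : J' ∪ K' ∪ L' = Finset.univ)
    (hJ : J.Nonempty) (hK : K.Nonempty) :
    (cellU n J' K' L' ⊆ cellU n J K L ↔ J ⊆ J' ∧ K ⊆ K') ∧
    (J ⊆ J' → K ⊆ K' → (J, K, L) ≠ (J', K', L') → L' ⊂ L) :=
  ⟨cellU_subset_cellU_iff hJK' hcover' hJ hK,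
    fun hJJ hKK hne => ssubset_of_union_eq_univ_of_disjoint hcover hJK' hJL' hKL' hJJ hKK hne⟩

/-- `U_{J'K'L'} ⊆ U_{JKL}` iff `J ⊆ J'` and `K ⊆ K'`; moreover in that case, if
the partitions differ, then `L' ⊊ L`. -/
theorem stmt_2 (n : ℕ) (hn : 1 ≤ n)
    (J K L J' K' L' : Finset (Fin (n + 2)))
    (hJK : Disjoint J K) (hJL : Disjoint J L) (hKL : Disjoint K L)
    (hcover : J ∪ K ∪ L = Finset.univ)
    (hJK' : Disjoint J' K') (hJL' : Disjoint J' L') (hKL' : Disjoint K' L')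
    (hcover' : J' ∪ K' ∪ L' = Finset.univ)
    (hJ : J.Nonempty) (hK : K.Nonempty) (hJ' : J'.Nonempty) (hK' : K'.Nonempty) :
    (cellU n J' K' L' ⊆ cellU n J K L ↔ J ⊆ J' ∧ K ⊆ K') ∧
    (J ⊆ J' → K ⊆ K' → (J, K, L) ≠ (J', K', L') → L' ⊂ L) :=
  stmt_2_general n J K L J' K' L' hcover hJK' hJL' hKL' hcover' hJ hK
end

section
/- Let n ≥ 1 and 0 < δ < 1/√(n+2). Suppose φ : ℝ → ℝ satisfies 0 < φ(x) ≤ 1 for all x, φ(x) = 1 for |x| ≤ δ, and φ(x) < 1 for |x| > δ. Let x ∈ ℝ^{n+2} with Σ_k x_k² = 1, and set μ = (Σ_k φ(x_k))/(n+2) and f_i = φ(x_i) − μ. If j, k are indices with x_j > δ and 0 ≤ x_k ≤ δ, then f_k·x_j − f_j·x_k > 0. -/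
open Finset Real

/-
At a coordinate `x_k ∈ [0, δ]` the value `φ(x_k)` is maximal, so `f_k = 1 - μ`, whereas
`φ(x_j) < 1` forces both `f_j < 1 - μ` and `μ < 1`. Hence
`f_k x_j - f_j x_k ≥ (1 - μ)(x_j - x_k) > 0`.
-/

theorem Fintype.sum_div_card_lt_one {ι : Type*} [Fintype ι] {g : ι → ℝ} (hle : ∀ i, g i ≤ 1)
    {j : ι} (hj : g j < 1) : (∑ i, g i) / Fintype.card ι < 1 := by
  have hcard : (0 : ℝ) < Fintype.card ι := Nat.cast_pos.mpr (Fintype.card_pos_iff.mpr ⟨j⟩)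
  rw [div_lt_one hcard, ← Finset.card_univ, ← nsmul_one, ← Finset.sum_const]
  exact Finset.sum_lt_sum (fun i _ ↦ hle i) ⟨j, Finset.mem_univ j, hj⟩

theorem sub_mul_sub_mul_pos {a b c s t : ℝ} (hc : 0 < c) (ha : a = c) (hb : b < c)
    (ht : 0 ≤ t) (hts : t < s) : 0 < a * s - b * t := by
  have hbt : b * t ≤ c * t := mul_le_mul_of_nonneg_right hb.le ht
  have hcst : 0 < c * (s - t) := mul_pos hc (sub_pos.mpr hts)
  rw [ha]
  linarith

theorem stmt_4_general (n : ℕ) (δ : ℝ)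
    (hδ0 : 0 < δ)
    (φ : ℝ → ℝ)
    (hφle : ∀ x, φ x ≤ 1)
    (hφeq : ∀ x, |x| ≤ δ → φ x = 1)
    (hφlt : ∀ x, δ < |x| → φ x < 1)
    (x : Fin (n + 2) → ℝ)
    (μ : ℝ) (hμ : μ = (∑ l, φ (x l)) / (n + 2))
    (f : Fin (n + 2) → ℝ) (hf : ∀ i, f i = φ (x i) - μ)
    (j k : Fin (n + 2)) (hj : δ < x j) (hk0 : 0 ≤ x k) (hkδ : x k ≤ δ) :
    0 < f k * x j - f j * x k := by
  have hφj : φ (x j) < 1 := hφlt _ (by rwa [abs_of_pos (hδ0.trans hj)])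
  have hμ1 : μ < 1 := by
    have := Fintype.sum_div_card_lt_one (fun l ↦ hφle (x l)) hφj
    simpa [hμ] using this
  have hfk : f k = 1 - μ := by rw [hf, hφeq _ (abs_le.mpr ⟨by linarith, hkδ⟩)]
  have hfj : f j < 1 - μ := by rw [hf]; linarith
  exact sub_mul_sub_mul_pos (sub_pos.mpr hμ1) hfk hfj hk0 (hkδ.trans_lt hj)

/-- Monotonicity of the gradient flow: if `x_j > δ` and `0 ≤ x_k ≤ δ`, then
`f_k·x_j − f_j·x_k > 0`, where `f_i = φ(x_i) − (Σ φ(x_l))/(n+2)`. -/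
theorem stmt_4 (n : ℕ) (hn : 1 ≤ n) (δ : ℝ)
    (hδ0 : 0 < δ) (hδ1 : δ < 1 / Real.sqrt (n + 2))
    (φ : ℝ → ℝ)
    (hφpos : ∀ x, 0 < φ x) (hφle : ∀ x, φ x ≤ 1)
    (hφeq : ∀ x, |x| ≤ δ → φ x = 1)
    (hφlt : ∀ x, δ < |x| → φ x < 1)
    (x : Fin (n + 2) → ℝ) (hx : ∑ l, (x l) ^ 2 = 1)
    (μ : ℝ) (hμ : μ = (∑ l, φ (x l)) / (n + 2))
    (f : Fin (n + 2) → ℝ) (hf : ∀ i, f i = φ (x i) - μ)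
    (j k : Fin (n + 2)) (hj : δ < x j) (hk0 : 0 ≤ x k) (hkδ : x k ≤ δ) :
    0 < f k * x j - f j * x k :=
  stmt_4_general n δ hδ0 φ hφle hφeq hφlt x μ hμ f hf j k hj hk0 hkδ
end
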